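/- arXiv:math/0012158 — 2 statements merged into one kernel-verified Lean document; each statement's English description precedes it below -/
import Mathlib

section
/- If char k = 0, then the skew field of formal pseudo-differential operators k((X))((∂⁻¹)) is an infinite dimensional vector space over its center. -/
/-- If `char k = 0`, the skew field of formal pseudo-differential
operators `k((X))((∂⁻¹))` (modelled abstractly: a division ring `K` containing
`k((X))` via an injective ring homomorphism `ι`, with an invertible `D = ∂`
satisfying `∂·a = a·∂ + a'`, `a'` the formal derivative) is an
infinite-dimensional vector space over its centre. -/
theorem pseudo_differential_infinite_dimensional_over_center
    (k : Type*) [Field k] [CharZero k]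
    (d : LaurentSeries k → LaurentSeries k)
    (hd : ∀ (f : LaurentSeries k) (m : ℤ), (d f).coeff m = (m + 1) • f.coeff (m + 1))
    (K : Type*) [DivisionRing K]
    (ι : LaurentSeries k →+* K)
    (D : Kˣ)
    (hrel : ∀ a : LaurentSeries k, (D : K) * ι a = ι a * D + ι (d a)) :
    ¬ Module.Finite (Subring.center K) K := by
  intro hfin
  -- X as a Laurent series
  set X : LaurentSeries k := HahnSeries.single 1 1 with hX
  have hdX : d X = 1 := by
    ext m
    rw [hd]
    rcases eq_or_ne m 0 with rfl | hm
    · simp [hX]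
    · rw [HahnSeries.coeff_one, if_neg hm]
      rcases eq_or_ne (m + 1) 1 with h1 | h1
      · omega
      · rw [hX, HahnSeries.coeff_single_of_ne h1, smul_zero]
  have hcomm : (D : K) * ι X - ι X * (D : K) = 1 := by
    rw [hrel X, hdX, map_one]; exact add_sub_cancel_left _ _
  -- characteristic zero of K
  haveI : CharZero K := by
    have hinj : Function.Injective (ι.comp (HahnSeries.C : k →+* LaurentSeries k)) :=
      ι.injective.comp HahnSeries.C_injective
    exact (RingHom.charZero_iff hinj).mp inferInstance
  set Z := Subring.center K
  haveI : CharZero Z := by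
    refine ⟨fun m n h => ?_⟩
    have : ((m : Z) : K) = ((n : Z) : K) := by rw [h]
    simpa using this
  -- trace argument
  have key := LinearMap.trace_mul_comm Z (LinearMap.mulLeft Z (D : K)) (LinearMap.mulLeft Z (ι X))
  have h1 : LinearMap.mulLeft Z ((D : K) * ι X - ι X * (D : K)) = (1 : K →ₗ[Z] K) := by
    rw [hcomm, LinearMap.mulLeft_one]; rfl
  have hsub : LinearMap.mulLeft Z ((D : K) * ι X - ι X * (D : K))
      = LinearMap.mulLeft Z ((D : K) * ι X) - LinearMap.mulLeft Z (ι X * (D : K)) := by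
    ext x; simp [sub_mul, mul_assoc]
  have h2 : LinearMap.trace Z K (LinearMap.mulLeft Z ((D : K) * ι X - ι X * (D : K))) = 0 := by
    rw [hsub, map_sub, LinearMap.mulLeft_mul, LinearMap.mulLeft_mul]
    rw [show (LinearMap.mulLeft Z (D:K)) ∘ₗ (LinearMap.mulLeft Z (ι X))
        = (LinearMap.mulLeft Z (D:K)) * (LinearMap.mulLeft Z (ι X)) from rfl,
      show (LinearMap.mulLeft Z (ι X)) ∘ₗ (LinearMap.mulLeft Z (D:K))
        = (LinearMap.mulLeft Z (ι X)) * (LinearMap.mulLeft Z (D:K)) from rfl,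
      key, sub_self]
  rw [h1, LinearMap.trace_one] at h2
  have hpos : 0 < Module.finrank Z K := Module.finrank_pos
  exact absurd (Nat.cast_injective (h2.trans (Nat.cast_zero).symm)) (by omega)
end

section
/- Let O be a complete discrete valuation ring with maximal ideal M, residue field K₁ and a fixed prime t₂, and let L ⊆ O be a subring mapping isomorphically onto a subfield L̄ of K₁. Suppose a ∈ O and for each m ≥ 1 there is u_m ∈ 1 + M^m·(units) such that conjugation by u_m⋯u₁·a centralizes L modulo M^{m+1}. Then the limit a' = lim (…(1+a₂t₂²)(1+a₁t₂)a) exists in O and centralizes L: a' x a'⁻¹ = x for all x ∈ L. -/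
/-!
The partial products `p m` are units of the valuation ring, and
`p (m + 1) - p m = (u m - 1) * p m` has valuation `≥ m + 1`, so they form a Cauchy sequence
whose limit `a'` is again a unit. Since `p m * x - x * p m = (p m * x * (p m)⁻¹ - x) * p m`,
the commutator of `p m` with `x ∈ L` has valuation `≥ m + 1`; passing to the limit,
`a' * x - x * a'` has infinite valuation, i.e. vanishes.
-/

namespace AddValuation

variable {K : Type*} [DivisionRing K] (v : AddValuation K (WithTop ℤ))

theorem eq_zero_of_forall_natCast_le {z : K} (h : ∀ m : ℕ, ((m : ℤ) : WithTop ℤ) ≤ v z) :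
    z = 0 := by
  rw [← v.top_iff]
  induction hz : v z using WithTop.recTopCoe with
  | top => rfl
  | coe k =>
    have hk := h (k.natAbs + 1)
    rw [hz] at hk
    norm_cast at hk
    omega

theorem map_eq_zero_of_pos_map_sub {x y : K} (hx : v x = 0) (h : 0 < v (y - x)) : v y = 0 :=
  (v.map_eq_of_lt_sub (hx ▸ h)).trans hx

theorem map_mul_sub_mul_eq_map_conj_sub {b : K} (hb : v b = 0) (x : K) :
    v (b * x - x * b) = v (b * x * b⁻¹ - x) := by
  have hb0 : b ≠ 0 := by rintro rfl; simp at hb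
  rw [← add_zero (v (_ - x)), ← hb, ← v.map_mul, sub_mul, inv_mul_cancel_right₀ hb0]

theorem commute_of_forall_le_map_mul_sub_mul {a x : K} {p : ℕ → K} (hx : 0 ≤ v x)
    (hlim : ∀ m : ℕ, ∃ N : ℕ, ∀ j ≥ N, ((m : ℤ) : WithTop ℤ) ≤ v (a - p j))
    (hp : ∀ m : ℕ, ((m : ℤ) : WithTop ℤ) ≤ v (p m * x - x * p m)) :
    Commute a x := by
  refine sub_eq_zero.mp (v.eq_zero_of_forall_natCast_le fun m => ?_)
  obtain ⟨N, hN⟩ := hlim m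
  set j := max N m
  have hdist : ((m : ℤ) : WithTop ℤ) ≤ v (a - p j) := hN j (le_max_left N m)
  have hcomm : ((m : ℤ) : WithTop ℤ) ≤ v (p j * x - x * p j) :=
    (WithTop.coe_le_coe.mpr (Int.ofNat_le.mpr (le_max_right N m))).trans (hp j)
  have hsplit : a * x - x * a = ((a - p j) * x - x * (a - p j)) + (p j * x - x * p j) := by
    noncomm_ring
  rw [hsplit]
  refine v.map_le_add (v.map_le_sub ?_ ?_) hcomm
  · rw [v.map_mul]; exact le_add_of_le_of_nonneg hdist hx
  · rw [v.map_mul]; exact le_add_of_nonneg_of_le hx hdist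

end AddValuation

/-- Successive approximation in a complete discrete valuation skew
field: let `K₂` be a division ring with additive valuation `v` (ring of integers
`O = {v ≥ 0}`, maximal ideal `M = {v ≥ 1}`) which is complete, `L` a subring of
`O`, `a ∈ O` a unit of `O`, and `u_m ∈ 1 + M^{m+1}` units such that each partial
product `p_m = u_{m-1}⋯u_0·a` centralizes `L` modulo `M^{m+1}`. Then the limit
`a' = lim p_m` exists in `O` and centralizes `L` exactly: `a' x a'⁻¹ = x` for
all `x ∈ L`. -/
theorem successive_approximation_centralizer
    (K : Type*) [DivisionRing K]
    (v : AddValuation K (WithTop ℤ))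
    (hcomplete : ∀ s : ℕ → K,
      (∀ m : ℕ, ((m : ℤ) : WithTop ℤ) ≤ v (s (m + 1) - s m)) →
      ∃ l : K, ∀ m : ℕ, ∃ N : ℕ, ∀ j ≥ N, ((m : ℤ) : WithTop ℤ) ≤ v (l - s j))
    (L : Subring K) (hL : ∀ x ∈ L, 0 ≤ v x)
    (a : K) (ha : v a = 0)
    (u : ℕ → Kˣ)
    (hu : ∀ m : ℕ, (((m : ℤ) + 1) : WithTop ℤ) ≤ v ((u m : K) - 1))
    (p : ℕ → K) (hp0 : p 0 = a) (hpsucc : ∀ m, p (m + 1) = (u m : K) * p m)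
    (hcent : ∀ m : ℕ, ∀ x ∈ L,
      (((m : ℤ) + 1) : WithTop ℤ) ≤ v (p m * x * (p m)⁻¹ - x)) :
    ∃ a' : K,
      (∀ m : ℕ, ∃ N : ℕ, ∀ j ≥ N, ((m : ℤ) : WithTop ℤ) ≤ v (a' - p j)) ∧
      a' ≠ 0 ∧
      ∀ x ∈ L, a' * x * a'⁻¹ = x := by
  have hsucc (m : ℕ) : ((m : ℤ) : WithTop ℤ) ≤ (((m : ℤ) + 1) : WithTop ℤ) := by
    exact_mod_cast Nat.le_succ m
  have hvu (m : ℕ) : v (u m : K) = 0 :=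
    v.map_eq_zero_of_pos_map_sub v.map_one
      (lt_of_lt_of_le (by exact_mod_cast m.cast_add_one_pos) (hu m))
  have hvp (m : ℕ) : v (p m) = 0 := by
    induction m with
    | zero => rw [hp0, ha]
    | succ m ih => rw [hpsucc, v.map_mul, hvu, ih, add_zero]
  have hcauchy (m : ℕ) : ((m : ℤ) : WithTop ℤ) ≤ v (p (m + 1) - p m) := by
    rw [hpsucc, ← sub_one_mul, v.map_mul, hvp, add_zero]
    exact (hsucc m).trans (hu m)
  obtain ⟨a', hlim⟩ := hcomplete p hcauchy
  have hva' : v a' = 0 := by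
    obtain ⟨N, hN⟩ := hlim 1
    exact v.map_eq_zero_of_pos_map_sub (hvp N) (lt_of_lt_of_le (by simp) (hN N le_rfl))
  have ha'0 : a' ≠ 0 := by rintro rfl; simp at hva'
  refine ⟨a', hlim, ha'0, fun x hx => ?_⟩
  have hcomm : Commute a' x := v.commute_of_forall_le_map_mul_sub_mul (hL x hx) hlim fun m => by
    rw [v.map_mul_sub_mul_eq_map_conj_sub (hvp m)]
    exact (hsucc m).trans (hcent m x hx)
  rw [hcomm.eq, mul_inv_cancel_right₀ ha'0]
end
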